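/- For a real number λ, there exists x ∈ ℝ^{n+m} such that (λ, x) is a solution of the eigenvalue system (EV) if and only if there exists y ∈ ℝ^4 such that (λ, y) is a solution of the four-variable system (S). -/
import Mathlib


open Finset


lemma min4aux (lam p q : ℝ) (h : lam ≤ 1/2) :
    min (min (lam + p) ((1 - lam) + q)) (min ((1 - lam) + p) (lam + q)) = lam + min p q := by
  rcases le_total p q with h' | h'
  · rw [min_eq_left h']
    apply le_antisymm
    · exact (min_le_left _ _).trans (min_le_left _ _)
    · refine le_min (le_min ?_ ?_) (le_min ?_ ?_) <;> linarith
  · rw [min_eq_right h']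
    apply le_antisymm
    · exact (min_le_right _ _).trans (min_le_right _ _)
    · refine le_min (le_min ?_ ?_) (le_min ?_ ?_) <;> linarith

lemma minaux3 (d e g t : ℝ) (h : t = min d e) (hg : t ≤ g) : min d (min e g) = t := by
  apply le_antisymm
  · calc min d (min e g) ≤ min d e := min_le_min_left _ (min_le_left _ _)
    _ = t := h.symm
  · exact le_min (h.le.trans (min_le_left _ _)) (le_min (h.le.trans (min_le_right _ _)) hg)

lemma sum_shift (f : ℕ → ℝ) (n c d : ℕ) :
    ∑ k ∈ Icc c d, f (n + k) = ∑ k ∈ Icc (n + c) (n + d), f k := by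
  rw [← Finset.map_add_left_Icc, Finset.sum_map]
  rfl

lemma teleLE (a x : ℕ → ℝ) (lam : ℝ) :
    ∀ k, (∀ j, 1 ≤ j → j ≤ k → x (j+1) ≤ a j - lam + x j) →
      x (k+1) ≤ (∑ j ∈ Icc 1 k, a j) - (k : ℝ) * lam + x 1 := by
  intro k
  induction k with
  | zero => intro _; rw [Finset.Icc_eq_empty (by omega)]; simp
  | succ k ih =>
    intro h
    have h1 := h (k+1) (by omega) le_rfl
    have h2 := ih (fun j hj1 hj2 => h j hj1 (by omega))
    rw [Finset.sum_Icc_succ_top (by omega : 1 ≤ k+1)]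
    push_cast
    linarith

lemma teleEQ (a x : ℕ → ℝ) (lam : ℝ) :
    ∀ k, (∀ j, 1 ≤ j → j ≤ k → x (j+1) = a j - lam + x j) →
      x (k+1) = (∑ j ∈ Icc 1 k, a j) - (k : ℝ) * lam + x 1 := by
  intro k
  induction k with
  | zero => intro _; rw [Finset.Icc_eq_empty (by omega)]; simp
  | succ k ih =>
    intro h
    have h1 := h (k+1) (by omega) le_rfl
    have h2 := ih (fun j hj1 hj2 => h j hj1 (by omega))
    rw [Finset.sum_Icc_succ_top (by omega : 1 ≤ k+1)]
    push_cast
    linarith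

lemma teleLE' (a x : ℕ → ℝ) (lam : ℝ) :
    ∀ k, (∀ j, 1 ≤ j → j ≤ k → x j ≤ (1 - a j) - lam + x (j+1)) →
      x 1 ≤ (∑ j ∈ Icc 1 k, (1 - a j)) - (k : ℝ) * lam + x (k+1) := by
  intro k
  induction k with
  | zero => intro _; rw [Finset.Icc_eq_empty (by omega)]; simp
  | succ k ih =>
    intro h
    have h1 := h (k+1) (by omega) le_rfl
    have h2 := ih (fun j hj1 hj2 => h j hj1 (by omega))
    rw [Finset.sum_Icc_succ_top (by omega : 1 ≤ k+1)]
    push_cast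
    linarith

lemma teleEQ' (a x : ℕ → ℝ) (lam : ℝ) :
    ∀ k, (∀ j, 1 ≤ j → j ≤ k → x j = (1 - a j) - lam + x (j+1)) →
      x 1 = (∑ j ∈ Icc 1 k, (1 - a j)) - (k : ℝ) * lam + x (k+1) := by
  intro k
  induction k with
  | zero => intro _; rw [Finset.Icc_eq_empty (by omega)]; simp
  | succ k ih =>
    intro h
    have h1 := h (k+1) (by omega) le_rfl
    have h2 := ih (fun j hj1 hj2 => h j hj1 (by omega))
    rw [Finset.sum_Icc_succ_top (by omega : 1 ≤ k+1)]
    push_cast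
    linarith


lemma chainTop (N : ℕ) (hN : 2 ≤ N) (a x : ℕ → ℝ) (lam A : ℝ) (hlam : lam < 1/2)
    (hch : ∀ i, 2 ≤ i → i ≤ N - 1 →
      lam + x i = min (a (i-1) + x (i-1)) ((1 - a i) + x (i+1)))
    (hN' : x N = min A (a (N-1) - lam + x (N-1))) :
    x N = min A ((∑ k ∈ Icc 1 (N-1), a k) - ((N : ℝ) - 1) * lam + x 1) := by
  have hstep : ∀ j, 1 ≤ j → j ≤ N - 1 → x (j+1) ≤ a j - lam + x j := by
    intro j hj1 hj2
    rcases eq_or_lt_of_le hj2 with he | hlt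
    · have h1 : x N ≤ a (N-1) - lam + x (N-1) := hN' ▸ min_le_right _ _
      subst he
      rw [show N - 1 + 1 = N by omega]
      exact h1
    · have hc := hch (j+1) (by omega) (by omega)
      have e : j + 1 - 1 = j := by omega
      rw [e] at hc
      have := hc ▸ min_le_left (a j + x j) ((1 - a (j+1)) + x (j+1+1))
      linarith [hc.le.trans (min_le_left (a j + x j) ((1 - a (j+1)) + x (j+1+1)))]
  have hle : x N ≤ (∑ k ∈ Icc 1 (N-1), a k) - ((N : ℝ) - 1) * lam + x 1 := by
    have h := teleLE a x lam (N-1) hstep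
    have e : N - 1 + 1 = N := by omega
    have ec : ((N - 1 : ℕ) : ℝ) = (N : ℝ) - 1 := by
      push_cast [Nat.cast_sub (by omega : 1 ≤ N)]; ring
    rw [e, ec] at h
    exact h
  rcases le_or_gt A (a (N-1) - lam + x (N-1)) with hA | hA
  · have hxA : x N = A := by rw [hN', min_eq_left hA]
    rw [hxA]
    exact (min_eq_left (by linarith [hle, hxA])).symm
  · have hxC : x N = a (N-1) - lam + x (N-1) := by rw [hN', min_eq_right hA.le]
    have key : ∀ k, k ≤ N - 2 → x (N - k) = a (N - k - 1) - lam + x (N - k - 1) := by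
      intro k
      induction k with
      | zero =>
        intro _
        simpa using hxC
      | succ k ih =>
        intro hk
        have Hk := ih (by omega)
        have h2i : 2 ≤ N - k - 1 := by omega
        have hiN : N - k - 1 ≤ N - 1 := by omega
        have hc := hch (N - k - 1) h2i hiN
        have e : N - k - 1 + 1 = N - k := by omega
        rw [e] at hc
        have hgt : lam + x (N - k - 1) < (1 - a (N - k - 1)) + x (N - k) := by
          rw [Hk]; linarith
        have hmin : lam + x (N - k - 1) = a (N - k - 1 - 1) + x (N - k - 1 - 1) := by
          rcases min_choice (a (N - k - 1 - 1) + x (N - k - 1 - 1))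
              ((1 - a (N - k - 1)) + x (N - k)) with hmc | hmc
          · rw [hc, hmc]
          · rw [hc, hmc] at hgt; linarith
        have e1 : N - (k+1) = N - k - 1 := by omega
        rw [e1]
        linarith
    have hsteq : ∀ j, 1 ≤ j → j ≤ N - 1 → x (j+1) = a j - lam + x j := by
      intro j hj1 hj2
      have h := key (N - 1 - j) (by omega)
      have e1 : N - (N - 1 - j) = j + 1 := by omega
      rw [e1, show j + 1 - 1 = j by omega] at h
      exact h
    have heq : x N = (∑ k ∈ Icc 1 (N-1), a k) - ((N : ℝ) - 1) * lam + x 1 := by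
      have h := teleEQ a x lam (N-1) hsteq
      have e : N - 1 + 1 = N := by omega
      have ec : ((N - 1 : ℕ) : ℝ) = (N : ℝ) - 1 := by
        push_cast [Nat.cast_sub (by omega : 1 ≤ N)]; ring
      rw [e, ec] at h
      exact h
    rw [← heq]
    exact (min_eq_right (by linarith [hxC])).symm

lemma chainBot (N : ℕ) (hN : 2 ≤ N) (a x : ℕ → ℝ) (lam D : ℝ) (hlam : lam < 1/2)
    (hch : ∀ i, 2 ≤ i → i ≤ N - 1 →
      lam + x i = min (a (i-1) + x (i-1)) ((1 - a i) + x (i+1)))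
    (h1' : x 1 = min D ((1 - a 1) - lam + x 2)) :
    x 1 = min D ((∑ k ∈ Icc 1 (N-1), (1 - a k)) - ((N : ℝ) - 1) * lam + x N) := by
  have hstep : ∀ j, 1 ≤ j → j ≤ N - 1 → x j ≤ (1 - a j) - lam + x (j+1) := by
    intro j hj1 hj2
    rcases eq_or_lt_of_le hj1 with he | hlt
    · rw [← he]
      exact h1' ▸ min_le_right _ _
    · have hc := hch j (by omega) hj2
      linarith [hc.le.trans (min_le_right (a (j-1) + x (j-1)) ((1 - a j) + x (j+1)))]
  have hle : x 1 ≤ (∑ k ∈ Icc 1 (N-1), (1 - a k)) - ((N : ℝ) - 1) * lam + x N := by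
    have h := teleLE' a x lam (N-1) hstep
    have e : N - 1 + 1 = N := by omega
    have ec : ((N - 1 : ℕ) : ℝ) = (N : ℝ) - 1 := by
      push_cast [Nat.cast_sub (by omega : 1 ≤ N)]; ring
    rw [e, ec] at h
    exact h
  rcases le_or_gt D ((1 - a 1) - lam + x 2) with hD | hD
  · have hxD : x 1 = D := by rw [h1', min_eq_left hD]
    rw [hxD]
    exact (min_eq_left (by linarith [hle, hxD])).symm
  · have hxC : x 1 = (1 - a 1) - lam + x 2 := by rw [h1', min_eq_right hD.le]
    have key : ∀ j, 1 ≤ j → j ≤ N - 1 → x j = (1 - a j) - lam + x (j+1) := by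
      intro j
      induction j with
      | zero => omega
      | succ j ih =>
        intro _ hj2
        rcases Nat.eq_zero_or_pos j with hj0 | hj0
        · subst hj0; simpa using hxC
        · have Hj := ih (by omega) (by omega)
          have hc := hch (j+1) (by omega) hj2
          have e : j + 1 - 1 = j := by omega
          rw [e] at hc
          have hgt : lam + x (j+1) < a j + x j := by rw [Hj]; linarith
          rcases min_choice (a j + x j) ((1 - a (j+1)) + x (j+1+1)) with hmc | hmc
          · rw [hc, hmc] at hgt; linarith
          · rw [hmc] at hc; linarith
    have heq : x 1 = (∑ k ∈ Icc 1 (N-1), (1 - a k)) - ((N : ℝ) - 1) * lam + x N := by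
      have h := teleEQ' a x lam (N-1) key
      have e : N - 1 + 1 = N := by omega
      have ec : ((N - 1 : ℕ) : ℝ) = (N : ℝ) - 1 := by
        push_cast [Nat.cast_sub (by omega : 1 ≤ N)]; ring
      rw [e, ec] at h
      exact h
    rw [← heq]
    exact (min_eq_right (by linarith [hxC])).symm


noncomputable def Pf (a : ℕ → ℝ) (lam u : ℝ) (j : ℕ) : ℝ :=
  (∑ k ∈ Icc 1 (j-1), a k) - ((j : ℝ) - 1) * lam + u

noncomputable def Qf (N : ℕ) (a : ℕ → ℝ) (lam v : ℝ) (j : ℕ) : ℝ :=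
  (∑ k ∈ Icc j (N-1), (1 - a k)) - ((N : ℝ) - (j : ℝ)) * lam + v

noncomputable def Xf (N : ℕ) (a : ℕ → ℝ) (lam u v : ℝ) (j : ℕ) : ℝ :=
  min (Pf a lam u j) (Qf N a lam v j)

lemma Pf_one (a : ℕ → ℝ) (lam u : ℝ) : Pf a lam u 1 = u := by
  rw [Pf, Finset.Icc_eq_empty (by omega)]
  simp

lemma Qf_top (N : ℕ) (hN : 1 ≤ N) (a : ℕ → ℝ) (lam v : ℝ) : Qf N a lam v N = v := by
  rw [Qf, Finset.Icc_eq_empty (by omega)]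
  simp

lemma Pstep (a : ℕ → ℝ) (lam u : ℝ) (i : ℕ) (h2 : 2 ≤ i) :
    a (i-1) + Pf a lam u (i-1) = lam + Pf a lam u i := by
  rw [Pf, Pf]
  have e1 : i - 1 - 1 = i - 2 := by omega
  have e2 : i - 1 = (i - 2) + 1 := by omega
  have hs : ∑ k ∈ Icc 1 (i-1), a k = ∑ k ∈ Icc 1 (i-2), a k + a (i-1) := by
    rw [e2, Finset.sum_Icc_succ_top (by omega : 1 ≤ i - 2 + 1)]
  rw [e1, hs]
  have c1 : ((i - 1 : ℕ) : ℝ) = (i : ℝ) - 1 := by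
    push_cast [Nat.cast_sub (by omega : 1 ≤ i)]; ring
  rw [c1]
  ring

lemma Qstep (N : ℕ) (a : ℕ → ℝ) (lam v : ℝ) (i : ℕ) (h2 : 2 ≤ i) (hiN : i ≤ N) :
    a (i-1) + Qf N a lam v (i-1) = (1 - lam) + Qf N a lam v i := by
  rw [Qf, Qf]
  have hins : Icc (i-1) (N-1) = insert (i-1) (Icc i (N-1)) := by
    ext t
    simp only [Finset.mem_Icc, Finset.mem_insert]
    omega
  rw [hins, Finset.sum_insert (by simp only [Finset.mem_Icc]; omega)]
  have c1 : ((i - 1 : ℕ) : ℝ) = (i : ℝ) - 1 := by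
    push_cast [Nat.cast_sub (by omega : 1 ≤ i)]; ring
  rw [c1]
  ring

lemma Pstep' (a : ℕ → ℝ) (lam u : ℝ) (i : ℕ) (h1 : 1 ≤ i) :
    (1 - a i) + Pf a lam u (i+1) = (1 - lam) + Pf a lam u i := by
  rw [Pf, Pf]
  have e1 : i + 1 - 1 = (i - 1) + 1 := by omega
  rw [e1, Finset.sum_Icc_succ_top (by omega : 1 ≤ i - 1 + 1),
    show i - 1 + 1 = i by omega]
  push_cast
  ring

lemma Qstep' (N : ℕ) (a : ℕ → ℝ) (lam v : ℝ) (i : ℕ) (h1 : 1 ≤ i) (hiN : i ≤ N - 1) :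
    (1 - a i) + Qf N a lam v (i+1) = lam + Qf N a lam v i := by
  rw [Qf, Qf]
  have hins : Icc i (N-1) = insert i (Icc (i+1) (N-1)) := by
    ext t
    simp only [Finset.mem_Icc, Finset.mem_insert]
    omega
  rw [hins, Finset.sum_insert (by simp only [Finset.mem_Icc]; omega)]
  push_cast
  ring

lemma chainMid (N : ℕ) (a : ℕ → ℝ) (lam u v : ℝ) (hlam : lam ≤ 1/2)
    (i : ℕ) (h2 : 2 ≤ i) (hiN : i ≤ N - 1) :
    lam + Xf N a lam u v i
      = min (a (i-1) + Xf N a lam u v (i-1)) ((1 - a i) + Xf N a lam u v (i+1)) := by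
  have hL : a (i-1) + Xf N a lam u v (i-1)
      = min (lam + Pf a lam u i) ((1 - lam) + Qf N a lam v i) := by
    rw [Xf, ← min_add_add_left, Pstep a lam u i h2, Qstep N a lam v i h2 (by omega)]
  have hR : (1 - a i) + Xf N a lam u v (i+1)
      = min ((1 - lam) + Pf a lam u i) (lam + Qf N a lam v i) := by
    rw [Xf, ← min_add_add_left, Pstep' a lam u i (by omega), Qstep' N a lam v i (by omega) hiN]
  rw [hL, hR, min4aux lam _ _ hlam, Xf]


lemma bdryN (N : ℕ) (hN : 2 ≤ N) (a : ℕ → ℝ) (lam u v A : ℝ) (hlam : lam ≤ 1/2)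
    (hv : lam + v = min A (lam + Pf a lam u N)) :
    lam + v = min A (a (N-1) + Xf N a lam u v (N-1)) := by
  have hA : a (N-1) + Xf N a lam u v (N-1)
      = min (lam + Pf a lam u N) ((1 - lam) + v) := by
    rw [Xf, ← min_add_add_left, Pstep a lam u N hN, Qstep N a lam v N hN le_rfl,
      Qf_top N (by omega)]
  rw [hA]
  exact (minaux3 _ _ _ _ hv (by linarith)).symm

lemma bdry1 (N : ℕ) (hN : 2 ≤ N) (a : ℕ → ℝ) (lam u v D : ℝ) (hlam : lam ≤ 1/2)
    (hu : lam + u = min D (lam + Qf N a lam v 1)) :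
    lam + u = min D ((1 - a 1) + Xf N a lam u v 2) := by
  have hA : (1 - a 1) + Xf N a lam u v 2
      = min ((1 - lam) + u) (lam + Qf N a lam v 1) := by
    rw [Xf, ← min_add_add_left]
    rw [show (2:ℕ) = 1 + 1 from rfl, Pstep' a lam u 1 le_rfl, Pf_one,
      Qstep' N a lam v 1 le_rfl (by omega)]
  rw [hA, min_comm ((1 - lam) + u) (lam + Qf N a lam v 1)]
  exact (minaux3 _ _ _ _ hu (by linarith)).symm

/-- The eigenvalue system (EV) for the 2D-traffic dynamics: `lam` is the
additive eigenvalue and `x : ℕ → ℝ` carries the coordinates `x 1, …, x (n+m)`. -/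
def EVsol (n m : ℕ) (a : ℕ → ℝ) (lam : ℝ) (x : ℕ → ℝ) : Prop :=
  (∀ i : ℕ, ((2 ≤ i ∧ i ≤ n - 1) ∨ (n + 2 ≤ i ∧ i ≤ n + m - 1)) →
      lam + x i = min (a (i - 1) + x (i - 1)) ((1 - a i) + x (i + 1))) ∧
  lam + x n = min ((1 - (a n + a (n + m))) + x 1 + x (n + 1) - lam - x (n + m))
      (a (n - 1) + x (n - 1)) ∧
  lam + x (n + m) = min ((1 - (a n + a (n + m))) + x 1 + x (n + 1) - x n)
      (a (n + m - 1) + x (n + m - 1)) ∧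
  lam + x 1 = min (a n + (x n + x (n + m)) / 2) ((1 - a 1) + x 2) ∧
  lam + x (n + 1) = min (a (n + m) + (x n + x (n + m)) / 2) ((1 - a (n + 1)) + x (n + 2))

/-- The four-variable system (S), with variables `y1 = y_1`, `yn = y_n`,
`yn1 = y_{n+1}`, `ynm = y_{n+m}`. -/
def Ssol (n m : ℕ) (a : ℕ → ℝ) (lam y1 yn yn1 ynm : ℝ) : Prop :=
  yn = min ((1 - (a n + a (n + m))) - 2 * lam + y1 + yn1 - ynm)
      ((∑ i ∈ Finset.Icc 1 (n - 1), a i) - ((n : ℝ) - 1) * lam + y1) ∧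
  ynm = min ((1 - (a n + a (n + m))) - lam + y1 + yn1 - yn)
      ((∑ i ∈ Finset.Icc (n + 1) (n + m - 1), a i) - ((m : ℝ) - 1) * lam + yn1) ∧
  y1 = min (a n - lam + (yn + ynm) / 2)
      ((∑ i ∈ Finset.Icc 1 (n - 1), (1 - a i)) - ((n : ℝ) - 1) * lam + yn) ∧
  yn1 = min (a (n + m) - lam + (yn + ynm) / 2)
      ((∑ i ∈ Finset.Icc (n + 1) (n + m - 1), (1 - a i)) - ((m : ℝ) - 1) * lam + ynm)

theorem stmt5 (n m : ℕ) (hn : 2 ≤ n) (hm : 2 ≤ m) (a : ℕ → ℝ)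
    (ha : ∀ i : ℕ, 1 ≤ i → i ≤ n + m → 0 ≤ a i ∧ a i ≤ 1)
    (hprio : a n + a (n + m) ≤ 1)
    (lam : ℝ) :
    (∃ x : ℕ → ℝ, EVsol n m a lam x) ↔
      (∃ y1 yn yn1 ynm : ℝ, Ssol n m a lam y1 yn yn1 ynm) := by
  have hsum1 : ∑ k ∈ Icc 1 (m-1), a (n+k) = ∑ k ∈ Icc (n+1) (n+m-1), a k := by
    rw [sum_shift a n 1 (m-1), show n + (m-1) = n + m - 1 by omega]
  have hsum2 : ∑ k ∈ Icc 1 (m-1), (1 - a (n+k)) = ∑ k ∈ Icc (n+1) (n+m-1), (1 - a k) := by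
    rw [sum_shift (fun k => 1 - a k) n 1 (m-1), show n + (m-1) = n + m - 1 by omega]
  constructor
  · rintro ⟨x, hc, h2, h3, h4, h5⟩
    have l2 : lam + x n ≤ (1 - (a n + a (n+m))) + x 1 + x (n+1) - lam - x (n+m) :=
      h2.le.trans (min_le_left _ _)
    have l3 : lam + x (n+m) ≤ (1 - (a n + a (n+m))) + x 1 + x (n+1) - x n :=
      h3.le.trans (min_le_left _ _)
    have l4 : lam + x 1 ≤ a n + (x n + x (n+m)) / 2 := h4.le.trans (min_le_left _ _)
    have l5 : lam + x (n+1) ≤ a (n+m) + (x n + x (n+m)) / 2 := h5.le.trans (min_le_left _ _)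
    have hlam : lam < 1/2 := by linarith
    refine ⟨x 1, x n, x (n+1), x (n+m), ?_, ?_, ?_, ?_⟩
    · -- S1 via chainTop on first chain
      have hN' : x n = min ((1 - (a n + a (n+m))) - 2*lam + x 1 + x (n+1) - x (n+m))
          (a (n-1) - lam + x (n-1)) := by
        have : x n = min ((1 - (a n + a (n+m))) + x 1 + x (n+1) - lam - x (n+m) - lam)
            (a (n-1) + x (n-1) - lam) := by
          rw [min_sub_sub_right, ← h2]; ring
        rw [this]
        congr 1 <;> ring
      exact chainTop n hn a x lam _ hlam
        (fun i hi1 hi2 => hc i (Or.inl ⟨hi1, hi2⟩)) hN'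
    · -- S2 via chainTop on second chain
      have hch2 : ∀ i, 2 ≤ i → i ≤ m - 1 →
          lam + x (n+i) = min (a (n+(i-1)) + x (n+(i-1))) ((1 - a (n+i)) + x (n+(i+1))) := by
        intro i hi1 hi2
        have h := hc (n+i) (Or.inr ⟨by omega, by omega⟩)
        rw [show n + i - 1 = n + (i-1) by omega, show n + i + 1 = n + (i+1) by omega] at h
        exact h
      have hN' : x (n+m) = min ((1 - (a n + a (n+m))) - lam + x 1 + x (n+1) - x n)
          (a (n+(m-1)) - lam + x (n+(m-1))) := by
        have h3' := h3
        rw [show n + m - 1 = n + (m-1) by omega] at h3'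
        have : x (n+m) = min ((1 - (a n + a (n+m))) + x 1 + x (n+1) - x n - lam)
            (a (n+(m-1)) + x (n+(m-1)) - lam) := by
          rw [min_sub_sub_right, ← h3']; ring
        rw [this]
        congr 1 <;> ring
      have hres := chainTop m hm (fun j => a (n+j)) (fun j => x (n+j)) lam
        ((1 - (a n + a (n+m))) - lam + x 1 + x (n+1) - x n) hlam hch2 hN'
      rw [hsum1] at hres
      exact hres
    · -- S3 via chainBot on first chain
      have h1' : x 1 = min (a n - lam + (x n + x (n+m))/2) ((1 - a 1) - lam + x 2) := by
        have : x 1 = min (a n + (x n + x (n+m))/2 - lam) ((1 - a 1) + x 2 - lam) := by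
          rw [min_sub_sub_right, ← h4]; ring
        rw [this]
        congr 1 <;> ring
      exact chainBot n hn a x lam _ hlam
        (fun i hi1 hi2 => hc i (Or.inl ⟨hi1, hi2⟩)) h1'
    · -- S4 via chainBot on second chain
      have hch2 : ∀ i, 2 ≤ i → i ≤ m - 1 →
          lam + x (n+i) = min (a (n+(i-1)) + x (n+(i-1))) ((1 - a (n+i)) + x (n+(i+1))) := by
        intro i hi1 hi2
        have h := hc (n+i) (Or.inr ⟨by omega, by omega⟩)
        rw [show n + i - 1 = n + (i-1) by omega, show n + i + 1 = n + (i+1) by omega] at h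
        exact h
      have h1' : x (n+1) = min (a (n+m) - lam + (x n + x (n+m))/2)
          ((1 - a (n+1)) - lam + x (n+2)) := by
        have : x (n+1) = min (a (n+m) + (x n + x (n+m))/2 - lam)
            ((1 - a (n+1)) + x (n+2) - lam) := by
          rw [min_sub_sub_right, ← h5]; ring
        rw [this]
        congr 1 <;> ring
      have hres := chainBot m hm (fun j => a (n+j)) (fun j => x (n+j)) lam
        (a (n+m) - lam + (x n + x (n+m))/2) hlam hch2 h1'
      rw [hsum2] at hres
      exact hres
  · rintro ⟨y1, yn, yn1, ynm, hS1, hS2, hS3, hS4⟩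
    have l1 : yn ≤ (1 - (a n + a (n+m))) - 2*lam + y1 + yn1 - ynm :=
      hS1.le.trans (min_le_left _ _)
    have l2 : ynm ≤ (1 - (a n + a (n+m))) - lam + y1 + yn1 - yn :=
      hS2.le.trans (min_le_left _ _)
    have l3 : y1 ≤ a n - lam + (yn + ynm)/2 := hS3.le.trans (min_le_left _ _)
    have l4 : yn1 ≤ a (n+m) - lam + (yn + ynm)/2 := hS4.le.trans (min_le_left _ _)
    have hlam : lam ≤ 1/2 := by linarith
    set x : ℕ → ℝ := fun i =>
      if i ≤ n then Xf n a lam y1 yn i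
      else Xf m (fun j => a (n+j)) lam yn1 ynm (i - n) with hxdef
    have hxi : ∀ i, i ≤ n → x i = Xf n a lam y1 yn i := by
      intro i h; simp only [hxdef]; rw [if_pos h]
    have hxo : ∀ i, n < i → x i = Xf m (fun j => a (n+j)) lam yn1 ynm (i - n) := by
      intro i h; simp only [hxdef]; rw [if_neg (by omega)]
    have ex1 : x 1 = y1 := by
      rw [hxi 1 (by omega), Xf, Pf_one]
      refine min_eq_left ?_
      have hq : Qf n a lam yn 1
          = (∑ k ∈ Icc 1 (n-1), (1 - a k)) - ((n:ℝ) - 1) * lam + yn := by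
        rw [Qf]; norm_num
      rw [hq]
      exact hS3.le.trans (min_le_right _ _)
    have exn : x n = yn := by
      rw [hxi n le_rfl, Xf, Qf_top n (by omega)]
      refine min_eq_right ?_
      have hp : Pf a lam y1 n = (∑ k ∈ Icc 1 (n-1), a k) - ((n:ℝ) - 1) * lam + y1 := rfl
      rw [hp]
      exact hS1.le.trans (min_le_right _ _)
    have exn1 : x (n+1) = yn1 := by
      rw [hxo (n+1) (by omega), show n + 1 - n = 1 by omega, Xf, Pf_one]
      refine min_eq_left ?_
      have hq : Qf m (fun j => a (n+j)) lam ynm 1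
          = (∑ k ∈ Icc (n+1) (n+m-1), (1 - a k)) - ((m:ℝ) - 1) * lam + ynm := by
        simp only [Qf, Nat.cast_one]
        rw [hsum2]
      rw [hq]
      exact hS4.le.trans (min_le_right _ _)
    have exnm : x (n+m) = ynm := by
      rw [hxo (n+m) (by omega), show n + m - n = m by omega, Xf, Qf_top m (by omega)]
      refine min_eq_right ?_
      have hp : Pf (fun j => a (n+j)) lam yn1 m
          = (∑ k ∈ Icc (n+1) (n+m-1), a k) - ((m:ℝ) - 1) * lam + yn1 := by
        simp only [Pf]
        rw [hsum1]
      rw [hp]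
      exact hS2.le.trans (min_le_right _ _)
    refine ⟨x, ?_, ?_, ?_, ?_, ?_⟩
    · intro i hi
      rcases hi with ⟨hi1, hi2⟩ | ⟨hi1, hi2⟩
      · rw [hxi i (by omega), hxi (i-1) (by omega), hxi (i+1) (by omega)]
        exact chainMid n a lam y1 yn hlam i hi1 hi2
      · obtain ⟨j, rfl⟩ : ∃ j, i = n + j := ⟨i - n, by omega⟩
        rw [show n + j - 1 = n + (j-1) by omega, show n + j + 1 = n + (j+1) by omega,
          hxo (n+j) (by omega), hxo (n+(j-1)) (by omega), hxo (n+(j+1)) (by omega),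
          show n + j - n = j by omega, show n + (j-1) - n = j - 1 by omega,
          show n + (j+1) - n = j + 1 by omega]
        exact chainMid m (fun j => a (n+j)) lam yn1 ynm hlam j (by omega) (by omega)
    · -- equation at n
      rw [exn, ex1, exn1, exnm, hxi (n-1) (by omega)]
      have hv : lam + yn = min ((1 - (a n + a (n+m))) + y1 + yn1 - lam - ynm)
          (lam + Pf a lam y1 n) := by
        rw [hS1, ← min_add_add_left, Pf]
        congr 1 <;> ring
      exact bdryN n hn a lam y1 yn _ hlam hv
    · -- equation at n+m
      rw [exnm, ex1, exn1, exn, show n + m - 1 = n + (m-1) by omega,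
        hxo (n+(m-1)) (by omega), show n + (m-1) - n = m - 1 by omega]
      have hv : lam + ynm = min ((1 - (a n + a (n+m))) + y1 + yn1 - yn)
          (lam + Pf (fun j => a (n+j)) lam yn1 m) := by
        rw [hS2, ← min_add_add_left]
        simp only [Pf]
        rw [hsum1]
        congr 1 <;> ring
      exact bdryN m hm (fun j => a (n+j)) lam yn1 ynm _ hlam hv
    · -- equation at 1
      rw [ex1, exn, exnm, hxi 2 (by omega)]
      have hu : lam + y1 = min (a n + (yn + ynm)/2) (lam + Qf n a lam yn 1) := by
        rw [hS3, ← min_add_add_left, Qf]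
        norm_num
        congr 1 <;> ring
      exact bdry1 n hn a lam y1 yn _ hlam hu
    · -- equation at n+1
      rw [exn1, exn, exnm, hxo (n+2) (by omega), show n + 2 - n = 2 by omega]
      have hu : lam + yn1 = min (a (n+m) + (yn + ynm)/2)
          (lam + Qf m (fun j => a (n+j)) lam ynm 1) := by
        rw [hS4, ← min_add_add_left]
        simp only [Qf, Nat.cast_one]
        rw [hsum2]
        congr 1 <;> ring
      exact bdry1 m hm (fun j => a (n+j)) lam yn1 ynm _ hlam hu
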